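/- There exists a complex number c such that Σ_{k=2}^{n−1} (k+1/2)^{1+iπ/2} = (n−1/2)^{2+iπ/2}/(2+iπ/2) + (1/2)(n−1/2)^{1+iπ/2} + ((1+iπ/2)/12)(n−1/2)^{iπ/2} + c + O(1/n) as n → ∞. -/

import Mathlib

/-!
Euler–Maclaurin summation to third order: with the Peano kernel `B(u) = u (2u - 1)(u - 1) / 12`,
`f (x + 1) - ∫ₓ^{x+1} f - (f (x + 1) - f x) / 2 - (f' (x + 1) - f' x) / 12`
equals `∫ₓ^{x+1} B(t - x) f⁽³⁾(t) dt`, so it is at most `sup ‖f⁽³⁾‖ / 12`. For `f t = t ^ s` with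
`Re s ≤ 1` this is `O(x⁻²)`, which is `O(1/(x - 1/2) - 1/(x + 1/2))`. So the differences of the
sequence `∑ (k + 1/2) ^ s - eulerMaclaurinCpow s (n - 1/2)` telescope, and it converges at rate
`O(1/n)`.
-/

open Finset Real

theorem abs_mul_two_mul_sub_one_mul_sub_one_le {u : ℝ} (h₀ : 0 ≤ u) (h₁ : u ≤ 1) :
    |u * (2 * u - 1) * (u - 1)| ≤ 1 := by
  rw [abs_mul, abs_mul]
  calc |u| * |2 * u - 1| * |u - 1| ≤ 1 * 1 * 1 := by
        gcongr
        exacts [abs_le.2 ⟨by linarith, h₁⟩, abs_le.2 ⟨by linarith, by linarith⟩,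
          abs_le.2 ⟨by linarith, by linarith⟩]
    _ = 1 := by norm_num

open Set in
theorem norm_sub_eulerMaclaurin_le {E : Type*} [NormedAddCommGroup E] [NormedSpace ℝ E]
    {F f f₁ f₂ f₃ : ℝ → E} {x M : ℝ}
    (hF : ∀ t ∈ Icc x (x + 1), HasDerivAt F (f t) t)
    (hf : ∀ t ∈ Icc x (x + 1), HasDerivAt f (f₁ t) t)
    (hf₁ : ∀ t ∈ Icc x (x + 1), HasDerivAt f₁ (f₂ t) t)
    (hf₂ : ∀ t ∈ Icc x (x + 1), HasDerivAt f₂ (f₃ t) t)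
    (hM : ∀ t ∈ Ico x (x + 1), ‖f₃ t‖ ≤ M) :
    ‖f (x + 1) - (F (x + 1) - F x) - (1 / 2 : ℝ) • (f (x + 1) - f x)
      - (1 / 12 : ℝ) • (f₁ (x + 1) - f₁ x)‖ ≤ M / 12 := by
  -- `B''' = 1` and `B 0 = B 1 = 0`, so `ψ' = B (t - x) • f₃ t` and `ψ (x + 1) - ψ x` is the error.
  let B : ℝ → ℝ := fun u => u ^ 3 / 6 - u ^ 2 / 4 + u / 12
  let ψ : ℝ → E := fun t =>
    B (t - x) • f₂ t - ((t - x) ^ 2 / 2 - (t - x) / 2 + 1 / 12) • f₁ t + (t - x - 1 / 2) • f t - F t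
  have hψ : ∀ t ∈ Icc x (x + 1), HasDerivWithinAt ψ (B (t - x) • f₃ t) (Icc x (x + 1)) t := by
    intro t ht
    have hu : HasDerivAt (fun t : ℝ => t - x) 1 t := (hasDerivAt_id t).sub_const x
    have hB : HasDerivAt (fun t => B (t - x)) ((t - x) ^ 2 / 2 - (t - x) / 2 + 1 / 12) t :=
      ((((hu.pow 3).div_const 6).sub ((hu.pow 2).div_const 4)).add
        (hu.div_const 12)).congr_deriv (by ring)
    have hB' : HasDerivAt (fun t : ℝ => (t - x) ^ 2 / 2 - (t - x) / 2 + 1 / 12)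
        (t - x - 1 / 2) t :=
      ((((hu.pow 2).div_const 2).sub (hu.div_const 2)).add_const (1 / 12)).congr_deriv (by ring)
    have hB'' : HasDerivAt (fun t : ℝ => t - x - 1 / 2) 1 t := hu.sub_const _
    refine ((((hB.smul (hf₂ t ht)).sub (hB'.smul (hf₁ t ht))).add
      (hB''.smul (hf t ht))).sub (hF t ht)).hasDerivWithinAt.congr_deriv ?_
    simp only [one_smul]
    abel
  have hbound : ∀ t ∈ Ico x (x + 1), ‖B (t - x) • f₃ t‖ ≤ M / 12 := by
    intro t ht
    have hB : |B (t - x)| ≤ 1 / 12 := by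
      have : B (t - x) = (t - x) * (2 * (t - x) - 1) * (t - x - 1) / 12 := by simp only [B]; ring
      rw [this, abs_div, abs_of_pos (by norm_num : (0 : ℝ) < 12)]
      gcongr
      exact abs_mul_two_mul_sub_one_mul_sub_one_le (by linarith [ht.1]) (by linarith [ht.2])
    rw [norm_smul, Real.norm_eq_abs, div_eq_inv_mul]
    have hM0 : 0 ≤ M := (norm_nonneg _).trans (hM x ⟨le_rfl, by linarith⟩)
    calc |B (t - x)| * ‖f₃ t‖ ≤ (1 / 12) * M := by gcongr; exact hM t ht
      _ = 12⁻¹ * M := by norm_num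
  convert norm_image_sub_le_of_norm_deriv_le_segment' hψ hbound (x + 1) ⟨by linarith, le_rfl⟩
    using 2
  · simp only [ψ, B]
    norm_num
    module
  · ring

open Filter Topology in
theorem exists_norm_sub_le_of_norm_sub_succ_le {E : Type*} [NormedAddCommGroup E] [CompleteSpace E]
    {a : ℕ → E} {b : ℕ → ℝ} (hb : Tendsto b atTop (𝓝 0))
    (hab : ∀ n, ‖a (n + 1) - a n‖ ≤ b n - b (n + 1)) :
    ∃ c, ∀ n, ‖a n - c‖ ≤ b n := by
  have hanti : Antitone b :=
    antitone_nat_of_succ_le fun n => by linarith [hab n, norm_nonneg (a (n + 1) - a n)]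
  have hb0 : ∀ n, 0 ≤ b n := hanti.le_of_tendsto hb
  have htele : ∀ n m, n ≤ m → ‖a m - a n‖ ≤ b n := by
    suffices ∀ n m, n ≤ m → ‖a m - a n‖ ≤ b n - b m from
      fun n m hnm => (this n m hnm).trans (by linarith [hb0 m])
    intro n m hnm
    induction m, hnm using Nat.le_induction with
    | base => simp
    | succ m _ ih =>
      calc ‖a (m + 1) - a n‖ ≤ ‖a (m + 1) - a m‖ + ‖a m - a n‖ :=
            norm_sub_le_norm_sub_add_norm_sub _ _ _
        _ ≤ b n - b (m + 1) := by linarith [hab m]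
  obtain ⟨c, hc⟩ := cauchySeq_tendsto_of_complete <| cauchySeq_of_le_tendsto_0' (s := a) b
    (fun n m hnm => by rw [dist_comm, dist_eq_norm]; exact htele n m hnm) hb
  refine ⟨c, fun n => ?_⟩
  rw [norm_sub_rev]
  exact le_of_tendsto ((hc.sub_const (a n)).norm) (eventually_atTop.2 ⟨n, htele n⟩)

theorem hasDerivAt_const_mul_ofReal_cpow (a s : ℂ) {t : ℝ} (ht : 0 < t) :
    HasDerivAt (fun t : ℝ => a * (t : ℂ) ^ s) (a * s * (t : ℂ) ^ (s - 1)) t := by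
  rw [mul_assoc]
  exact ((Complex.hasStrictDerivAt_cpow_const
    (Complex.ofReal_mem_slitPlane.2 ht)).hasDerivAt.comp_ofReal).const_mul a

noncomputable def eulerMaclaurinCpow (s : ℂ) (x : ℝ) : ℂ :=
  (x : ℂ) ^ (s + 1) / (s + 1) + (x : ℂ) ^ s / 2 + s * (x : ℂ) ^ (s - 1) / 12

theorem norm_cpow_sub_eulerMaclaurinCpow_le {s : ℂ} (hs : s ≠ -1) (hre : s.re ≤ 3)
    {x : ℝ} (hx : 0 < x) :
    ‖((x + 1 : ℝ) : ℂ) ^ s - (eulerMaclaurinCpow s (x + 1) - eulerMaclaurinCpow s x)‖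
      ≤ ‖s * (s - 1) * (s - 2)‖ * x ^ (s.re - 3) / 12 := by
  have hpos : ∀ t ∈ Set.Icc x (x + 1), 0 < t := fun t ht => hx.trans_le ht.1
  have hf (a s : ℂ) : ∀ t ∈ Set.Icc x (x + 1),
      HasDerivAt (fun t : ℝ => a * (t : ℂ) ^ s) (a * s * (t : ℂ) ^ (s - 1)) t :=
    fun t ht => hasDerivAt_const_mul_ofReal_cpow a s (hpos t ht)
  have hbound : ∀ t ∈ Set.Ico x (x + 1), ‖s * (s - 1) * (s - 1 - 1) * (t : ℂ) ^ (s - 1 - 1 - 1)‖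
      ≤ ‖s * (s - 1) * (s - 2)‖ * x ^ (s.re - 3) := by
    intro t ht
    rw [norm_mul, Complex.norm_cpow_eq_rpow_re_of_pos (hx.trans_le ht.1)]
    have hre' : (s - 1 - 1 - 1).re = s.re - 3 := by simp; ring
    rw [hre', show s - 1 - 1 = s - 2 by ring]
    exact mul_le_mul_of_nonneg_left (Real.rpow_le_rpow_of_nonpos hx ht.1 (by linarith))
      (norm_nonneg _)
  have := norm_sub_eulerMaclaurin_le
    (fun t ht => hasDerivAt_ofReal_cpow_const' (hpos t ht).ne' hs) (by simpa using hf 1 s)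
    (hf s (s - 1)) (hf (s * (s - 1)) (s - 1 - 1)) hbound
  refine (le_of_eq ?_).trans this
  congr 1
  simp only [eulerMaclaurinCpow, Complex.real_smul]
  push_cast
  ring

theorem norm_cpow_sub_eulerMaclaurinCpow_le_sub {s : ℂ} (hs : s ≠ -1) (hre : s.re ≤ 1)
    {x : ℝ} (hx : 1 ≤ x) :
    ‖((x + 1 : ℝ) : ℂ) ^ s - (eulerMaclaurinCpow s (x + 1) - eulerMaclaurinCpow s x)‖
      ≤ ‖s * (s - 1) * (s - 2)‖ / 12 / (x - 1 / 2)
        - ‖s * (s - 1) * (s - 2)‖ / 12 / (x + 1 / 2) := by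
  have hpow : x ^ (s.re - 3) ≤ (x ^ 2)⁻¹ := by
    rw [← Real.rpow_natCast, ← Real.rpow_neg (by positivity)]
    exact Real.rpow_le_rpow_of_exponent_le hx (by push_cast; linarith)
  rw [div_sub_div _ _ (by linarith) (by linarith)]
  calc _ ≤ ‖s * (s - 1) * (s - 2)‖ * x ^ (s.re - 3) / 12 :=
        norm_cpow_sub_eulerMaclaurinCpow_le hs (by linarith) (by positivity)
    _ ≤ ‖s * (s - 1) * (s - 2)‖ * (x ^ 2)⁻¹ / 12 := by gcongr
    _ = ‖s * (s - 1) * (s - 2)‖ / 12 / x ^ 2 := by ring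
    _ ≤ ‖s * (s - 1) * (s - 2)‖ / 12 / ((x - 1 / 2) * (x + 1 / 2)) := by
        gcongr
        · nlinarith
        · nlinarith
    _ = _ := by ring

theorem exists_norm_sum_cpow_sub_eulerMaclaurinCpow_le {s : ℂ} (hs : s ≠ -1) (hre : s.re ≤ 1) :
    ∃ c : ℂ, ∀ n : ℕ, 2 ≤ n →
      ‖∑ k ∈ Icc 2 (n - 1), ((k : ℂ) + 1 / 2) ^ s - eulerMaclaurinCpow s (n - 1 / 2) - c‖
        ≤ ‖s * (s - 1) * (s - 2)‖ / (6 * n) := by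
  set C := ‖s * (s - 1) * (s - 2)‖ / 12 with hC
  -- `a m` is the error at `n = m + 2`; the shift makes the telescoping bound start at `m = 0`.
  set a : ℕ → ℂ := fun m =>
    ∑ k ∈ Icc 2 (m + 1), ((k : ℂ) + 1 / 2) ^ s - eulerMaclaurinCpow s (m + 3 / 2)
  have hstep : ∀ m : ℕ, ‖a (m + 1) - a m‖ ≤ C / (m + 1 : ℕ) - C / (m + 1 + 1 : ℕ) := by
    intro m
    have hdiff : a (m + 1) - a m = (((m + 3 / 2 : ℝ) + 1 : ℝ) : ℂ) ^ s
        - (eulerMaclaurinCpow s (m + 3 / 2 + 1) - eulerMaclaurinCpow s (m + 3 / 2)) := by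
      simp only [a, sum_Icc_succ_top (show 2 ≤ m + 1 + 1 by omega)]
      push_cast
      ring_nf
    rw [hdiff, hC]
    convert norm_cpow_sub_eulerMaclaurinCpow_le_sub hs hre
      (by linarith [m.cast_nonneg (α := ℝ)] : (1 : ℝ) ≤ m + 3 / 2) using 3 <;> push_cast <;> ring
  obtain ⟨c, hc⟩ := exists_norm_sub_le_of_norm_sub_succ_le
    (tendsto_const_div_atTop_nhds_zero_nat C |>.comp (Filter.tendsto_add_atTop_nat 1)) hstep
  refine ⟨c, fun n hn => ?_⟩
  obtain ⟨m, rfl⟩ : ∃ m, n = m + 2 := ⟨n - 2, by omega⟩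
  have ha : ∑ k ∈ Icc 2 (m + 2 - 1), ((k : ℂ) + 1 / 2) ^ s
      - eulerMaclaurinCpow s ((m + 2 : ℕ) - 1 / 2) = a m := by
    rw [show m + 2 - 1 = m + 1 by omega, show ((m + 2 : ℕ) : ℝ) - 1 / 2 = m + 3 / 2 by
      push_cast; ring]
  rw [ha]
  calc ‖a m - c‖ ≤ C / (m + 1 : ℕ) := hc m
    _ ≤ ‖s * (s - 1) * (s - 2)‖ / (6 * (m + 2 : ℕ)) := by
      rw [hC, div_div]
      exact div_le_div_of_nonneg_left (norm_nonneg _) (by positivity) (by push_cast; linarith)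

theorem sum_S1_asymptotics :
    ∃ c : ℂ, ∃ A > (0 : ℝ), ∃ N : ℕ, ∀ n : ℕ, n ≥ N →
      ‖(∑ k ∈ Finset.Icc 2 (n - 1), ((k : ℂ) + 1/2) ^ (1 + Complex.I * (π : ℂ)/2))
        - (((n : ℂ) - 1/2) ^ (2 + Complex.I * (π : ℂ)/2) / (2 + Complex.I * (π : ℂ)/2)
           + (1/2) * ((n : ℂ) - 1/2) ^ (1 + Complex.I * (π : ℂ)/2)
           + ((1 + Complex.I * (π : ℂ)/2) / 12) * ((n : ℂ) - 1/2) ^ (Complex.I * (π : ℂ)/2)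
           + c)‖ ≤ A / (n : ℝ) := by
  set s : ℂ := 1 + Complex.I * π / 2
  have hre : s.re = 1 := by simp [s]
  obtain ⟨c, hc⟩ := exists_norm_sum_cpow_sub_eulerMaclaurinCpow_le (s := s)
    (fun h => by norm_num [h] at hre) hre.le
  refine ⟨c, ‖s * (s - 1) * (s - 2)‖ / 6 + 1, by positivity, 2, fun n hn => ?_⟩
  have hG : eulerMaclaurinCpow s ((n : ℝ) - 1 / 2) = ((n : ℂ) - 1/2) ^ (2 + Complex.I * π / 2)
      / (2 + Complex.I * π / 2) + (1/2) * ((n : ℂ) - 1/2) ^ s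
      + (s / 12) * ((n : ℂ) - 1/2) ^ (Complex.I * π / 2) := by
    rw [eulerMaclaurinCpow, show s + 1 = 2 + Complex.I * π / 2 by ring,
      show s - 1 = Complex.I * π / 2 by ring]
    push_cast
    ring
  calc _ = ‖∑ k ∈ Icc 2 (n - 1), ((k : ℂ) + 1 / 2) ^ s
          - eulerMaclaurinCpow s (n - 1 / 2) - c‖ := by rw [hG, sub_sub]
    _ ≤ ‖s * (s - 1) * (s - 2)‖ / (6 * n) := hc n hn
    _ ≤ (‖s * (s - 1) * (s - 2)‖ / 6 + 1) / n := by
        rw [← div_div]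
        gcongr
        linarith
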